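/- For any finite simple graph G, the quotient graph ρ(G) is not isomorphic to K2. -/

import Mathlib

open SimpleGraph

universe u

/-- The closed neighborhood of a vertex. -/
def closedNbhd {V : Type u} (G : SimpleGraph V) (v : V) : Set V :=
  insert v (G.neighborSet v)

/-- Two vertices are siblings if they share the same closed neighborhood. -/
def Sibling {V : Type u} (G : SimpleGraph V) (u v : V) : Prop :=
  closedNbhd G u = closedNbhd G v

/-- A leaf is a vertex of degree one. -/
def IsLeaf {V : Type u} (G : SimpleGraph V) (v : V) : Prop :=
  Nat.card (G.neighborSet v) = 1

/-- The tuft number: the maximal number of leaves adjacent to a single vertex. -/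
noncomputable def tuftNumber {V : Type u} (G : SimpleGraph V) : ℕ :=
  ⨆ v : V, Nat.card {u | IsLeaf G u ∧ G.Adj v u}

/-- The sibling number: the maximum over vertices `v` of the number of vertices sharing
the closed neighborhood of `v`, minus one. -/
noncomputable def siblingNumber {V : Type u} (G : SimpleGraph V) : ℕ :=
  ⨆ v : V, (Nat.card {u | Sibling G u v} - 1)

/-- The complete graph on two vertices. -/
def K2 : SimpleGraph (Fin 2) := ⊤

/-- The sibling relation as a setoid. -/
def siblingSetoid {V : Type u} (G : SimpleGraph V) : Setoid V :=
  ⟨Sibling G, ⟨fun _ => rfl, fun {_ _} h => Eq.symm h, fun {_ _ _} h h' => Eq.trans h h'⟩⟩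

/-- `rho G` is the quotient of `G` by the sibling relation: vertices are sibling
equivalence classes, two distinct classes being adjacent iff some pair of
representatives is adjacent. -/
def rho {V : Type u} (G : SimpleGraph V) : SimpleGraph (Quotient (siblingSetoid G)) where
  Adj A B := A ≠ B ∧ ∃ u v : V, Quotient.mk (siblingSetoid G) u = A ∧
      Quotient.mk (siblingSetoid G) v = B ∧ G.Adj u v
  symm := by
    constructor
    rintro A B ⟨hne, u, v, hu, hv, h⟩
    exact ⟨hne.symm, v, u, hv, hu, h.symm⟩
  loopless := by
    constructor
    rintro A ⟨hne, -⟩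
    exact hne rfl

/-- `lamS G S` is the induced subgraph on the complement of `S`. -/
def lamS {V : Type u} (G : SimpleGraph V) (S : Set V) : SimpleGraph ↥(Sᶜ) :=
  SimpleGraph.induce Sᶜ G

/-- `lam G` is the induced subgraph on the set of non-leaf vertices. -/
def lam {V : Type u} (G : SimpleGraph V) : SimpleGraph ↥{v : V | ¬ IsLeaf G v} :=
  SimpleGraph.induce {v : V | ¬ IsLeaf G v} G

/-- A finite graph, bundled with its vertex type. -/
structure FinGraph : Type (u + 1) where
  V : Type u
  [finite : Finite V]
  G : SimpleGraph V

attribute [instance] FinGraph.finite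

/-- One reduction step: remove all leaves, then contract each sibling class to a point. -/
def redStep (X : FinGraph.{u}) : FinGraph.{u} :=
  ⟨Quotient (siblingSetoid (lam X.G)), rho (lam X.G)⟩

/-- The reduction of a finite graph: iterate `redStep` until it stabilizes (up to
isomorphism this happens after at most `Nat.card X.V` steps). -/
noncomputable def reduction (X : FinGraph.{u}) : FinGraph.{u} :=
  redStep^[Nat.card X.V] X

/-- `G` contains an induced cycle on `n` vertices. -/
def HasInducedCycle {V : Type u} (G : SimpleGraph V) (n : ℕ) : Prop :=
  ∃ s : Set V, Nonempty (SimpleGraph.induce s G ≃g cycleGraph n)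

/-- A graph is chordal if it has no induced cycle on four or more vertices. -/
def Chordal {V : Type u} (G : SimpleGraph V) : Prop :=
  ∀ m : ℕ, 4 ≤ m → ¬ HasInducedCycle G m

/-- The setoid identifying isomorphic graphs on `Fin n` satisfying a property `P`. -/
def graphSetoid (n : ℕ) (P : SimpleGraph (Fin n) → Prop) :
    Setoid {G : SimpleGraph (Fin n) // P G} :=
  ⟨fun G H => Nonempty (G.1 ≃g H.1),
    ⟨fun _ => ⟨Iso.refl⟩, fun ⟨e⟩ => ⟨e.symm⟩, fun ⟨e⟩ ⟨f⟩ => ⟨e.trans f⟩⟩⟩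

/-- The number of isomorphism classes of graphs on `n` vertices satisfying `P`. -/
noncomputable def numClasses (n : ℕ) (P : SimpleGraph (Fin n) → Prop) : ℕ :=
  Nat.card (Quotient (graphSetoid n P))

/-
If `ρ(G)` were complete, then any two vertices of `G` would be adjacent: vertices in one class
because siblings are equal or adjacent, vertices in different classes because an edge between two
sibling classes joins every pair of their representatives. But in a complete graph all closed
neighborhoods are the whole vertex set, so all vertices are siblings and `ρ(G)` has at most one
vertex, whereas `K2` has two.
-/

section Sibling

variable {V : Type u} {G : SimpleGraph V}

lemma Sibling.eq_or_adj {v w : V} (h : Sibling G v w) : v = w ∨ G.Adj v w := by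
  have hw : w ∈ closedNbhd G v := h ▸ Set.mem_insert w _
  rcases hw with rfl | hadj
  · exact Or.inl rfl
  · exact Or.inr hadj

lemma Sibling.adj_of_adj {v v' w : V} (h : Sibling G v v') (hadj : G.Adj v w) (hne : w ≠ v') :
    G.Adj v' w := by
  have hw : w ∈ closedNbhd G v' := h ▸ Set.mem_insert_of_mem v hadj
  rcases hw with rfl | hw
  · exact absurd rfl hne
  · exact hw

lemma closedNbhd_top (v : V) : closedNbhd (⊤ : SimpleGraph V) v = Set.univ := by
  ext w
  simp only [closedNbhd, Set.mem_insert_iff, mem_neighborSet, top_adj, Set.mem_univ, iff_true]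
  exact (eq_or_ne w v).imp_right Ne.symm

lemma sibling_top (v w : V) : Sibling (⊤ : SimpleGraph V) v w := by
  rw [Sibling, closedNbhd_top, closedNbhd_top]

end Sibling

section Rho

variable {V : Type u} {G : SimpleGraph V}

lemma rho_adj_mk_iff {v w : V} :
    (rho G).Adj (Quotient.mk (siblingSetoid G) v) (Quotient.mk (siblingSetoid G) w) ↔
      Quotient.mk (siblingSetoid G) v ≠ Quotient.mk (siblingSetoid G) w ∧ G.Adj v w := by
  refine ⟨fun ⟨hne, v', w', hv, hw, hadj⟩ => ⟨hne, ?_⟩,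
    fun ⟨hne, hadj⟩ => ⟨hne, v, w, rfl, rfl, hadj⟩⟩
  have hvv' : Sibling G v' v := Quotient.exact hv
  have hww' : Sibling G w' w := Quotient.exact hw
  have hvw' : G.Adj v w' := hvv'.adj_of_adj hadj fun h => hne (by rw [← hw, h])
  exact (hww'.adj_of_adj hvw'.symm fun h => hne (by rw [h])).symm

lemma eq_top_of_rho_eq_top (h : rho G = ⊤) : G = ⊤ := by
  ext v w
  refine ⟨G.ne_of_adj, fun hne => ?_⟩
  by_cases hvw : Quotient.mk (siblingSetoid G) v = Quotient.mk (siblingSetoid G) w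
  · exact (Quotient.exact hvw : Sibling G v w).eq_or_adj.resolve_left hne
  · have hadj : (rho G).Adj (Quotient.mk _ v) (Quotient.mk _ w) := by rw [h]; exact hvw
    exact (rho_adj_mk_iff.mp hadj).2

lemma subsingleton_of_rho_eq_top (h : rho G = ⊤) : Subsingleton (Quotient (siblingSetoid G)) := by
  refine ⟨Quotient.ind₂ fun v w => Quotient.sound ?_⟩
  change Sibling G v w
  rw [eq_top_of_rho_eq_top h]
  exact sibling_top v w

end Rho

theorem rho_not_iso_K2_general {V : Type} (G : SimpleGraph V) :
    ¬ Nonempty (rho G ≃g K2) := by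
  rintro ⟨e⟩
  have htop : rho G = ⊤ := by
    ext A B
    rw [← e.map_adj_iff]
    exact e.injective.ne_iff
  have h01 : e.symm 0 ≠ e.symm 1 := e.symm.injective.ne (by decide)
  exact h01 ((subsingleton_of_rho_eq_top htop).elim _ _)

/-- The quotient of a graph by its sibling relation is never isomorphic to `K2`. -/
theorem rho_not_iso_K2 {V : Type} [Fintype V] (G : SimpleGraph V) :
    ¬ Nonempty (rho G ≃g K2) :=
  rho_not_iso_K2_general G
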